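/- Let N ≥ 1, let 0 < σ₀ ≤ σ₁, let τ and σ₁̂, …, σ_N̂ : ℝ → ℝ be measurable functions bounded below by σ₀ and above by σ₁ almost everywhere on (0,1), and let a₁, …, a_N ∈ ℝ. Then the supremum of ∫_0^1 |(Σ_{i=1}^N a_i/σᵢ̂(x) − 1/τ(x)) · ∫_0^x f(t) dt| dx, taken over all f : ℝ → ℝ integrable on (0,1) with ∫_0^1 |∫_0^x f(t) dt| dx ≤ 1, equals esssup_{(0,1)} |Σ_{i=1}^N a_i/σᵢ̂ − 1/τ|. -/

import Mathlib

/-!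
The bound `≤` is Hölder's inequality `‖g F‖₁ ≤ ‖g‖_∞ ‖F‖₁` for the primitive `F` of `f`. For `≥`,
take `c` below the essential supremum of `|g|`: the set `B` where `|g| > c` has positive measure, so
by Lebesgue's density theorem some interval `[x₀ - h, x₀ + h] ⊆ (0, 1)` lies in `B` up to a
fraction `ε` of its length. The tent of height `h⁻¹` on that interval has mass `1`, is the
primitive of an integrable step function, and puts mass at most `2ε` outside `B`; it therefore
realises a value at least `c (1 - 2ε)`.
-/

open MeasureTheory Set
open scoped ENNReal

lemma integral_indicator_Ioc_one {a u v x : ℝ} (hau : a ≤ u) (huv : u ≤ v) (hax : a ≤ x) :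
    ∫ t in a..x, (Ioc u v).indicator 1 t = min v x - min u x := by
  rw [intervalIntegral.integral_of_le hax, setIntegral_indicator measurableSet_Ioc, Ioc_inter_Ioc,
    Pi.one_def, setIntegral_const, smul_eq_mul, mul_one, measureReal_def, Real.volume_Ioc,
    ENNReal.toReal_ofReal']
  rcases le_total x u with h1 | h1 <;> rcases le_total x v with h2 | h2 <;>
    simp [min_def, max_def] <;> split_ifs <;> linarith

lemma integrable_indicator_Ioc_one (u v : ℝ) : Integrable ((Ioc u v).indicator (1 : ℝ → ℝ)) :=
  IntegrableOn.integrable_indicator (integrableOn_const measure_Ioc_lt_top.ne) measurableSet_Ioc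

lemma integral_min_const {a b c : ℝ} (hac : a ≤ c) (hcb : c ≤ b) :
    ∫ x in a..b, min c x = c * b - c ^ 2 / 2 - a ^ 2 / 2 := by
  have hmin : Continuous fun x : ℝ => min c x := continuous_const.min continuous_id
  rw [← intervalIntegral.integral_add_adjacent_intervals (hmin.intervalIntegrable a c)
      (hmin.intervalIntegrable c b),
    intervalIntegral.integral_congr (g := fun x => x) fun x hx =>
      min_eq_right (uIcc_of_le hac ▸ hx).2,
    intervalIntegral.integral_congr (g := fun _ => c) fun x hx =>
      min_eq_left (uIcc_of_le hcb ▸ hx).1,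
    integral_id, intervalIntegral.integral_const, smul_eq_mul]
  ring

noncomputable section

-- The primitive of `tentDensity x₀ h` from any point left of `x₀ - h`, read off from
-- `integral_indicator_Ioc_one`: the tent of height `h⁻¹` on `[x₀ - h, x₀ + h]`.
def tent (x₀ h x : ℝ) : ℝ := (2 * min x₀ x - min (x₀ - h) x - min (x₀ + h) x) / h ^ 2

def tentDensity (x₀ h t : ℝ) : ℝ :=
  ((Ioc (x₀ - h) x₀).indicator 1 t - (Ioc x₀ (x₀ + h)).indicator 1 t) / h ^ 2

lemma integrable_tentDensity (x₀ h : ℝ) : Integrable (tentDensity x₀ h) :=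
  ((integrable_indicator_Ioc_one _ _).sub (integrable_indicator_Ioc_one _ _)).div_const _

lemma integral_tentDensity {a x₀ h x : ℝ} (ha : a ≤ x₀ - h) (hh : 0 ≤ h) (hx : a ≤ x) :
    ∫ t in a..x, tentDensity x₀ h t = tent x₀ h x := by
  have hi : ∀ u v, IntervalIntegrable ((Ioc u v).indicator (1 : ℝ → ℝ)) volume a x := fun u v =>
    (integrable_indicator_Ioc_one u v).intervalIntegrable
  simp only [tentDensity, tent]
  rw [intervalIntegral.integral_div, intervalIntegral.integral_sub (hi _ _) (hi _ _),
    integral_indicator_Ioc_one ha (by linarith) hx,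
    integral_indicator_Ioc_one (by linarith) (by linarith) hx]
  ring

lemma continuous_tent (x₀ h : ℝ) : Continuous (tent x₀ h) := by
  unfold tent; fun_prop

lemma tent_nonneg (x₀ : ℝ) {h : ℝ} (hh : 0 ≤ h) (x : ℝ) : 0 ≤ tent x₀ h x := by
  refine div_nonneg ?_ (sq_nonneg h)
  rcases le_total x (x₀ - h) with h1 | h1 <;> rcases le_total x x₀ with h2 | h2 <;>
    rcases le_total x (x₀ + h) with h3 | h3 <;> simp [min_def] <;> split_ifs <;> linarith

lemma tent_le_inv (x₀ : ℝ) {h : ℝ} (hh : 0 < h) (x : ℝ) : tent x₀ h x ≤ h⁻¹ := by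
  rw [tent, div_le_iff₀ (by positivity), inv_mul_eq_div, sq, mul_div_cancel_right₀ _ hh.ne']
  rcases le_total x (x₀ - h) with h1 | h1 <;> rcases le_total x x₀ with h2 | h2 <;>
    rcases le_total x (x₀ + h) with h3 | h3 <;> simp [min_def] <;> split_ifs <;> linarith

lemma tent_eq_zero {x₀ h x : ℝ} (hh : 0 ≤ h) (hx : x ∉ Ioo (x₀ - h) (x₀ + h)) :
    tent x₀ h x = 0 := by
  rw [mem_Ioo, not_and_or, not_lt, not_lt] at hx
  rw [tent, div_eq_zero_iff]
  left
  rcases hx with hx | hx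
  · rw [min_eq_right hx, min_eq_right (by linarith), min_eq_right (by linarith)]; ring
  · rw [min_eq_left hx, min_eq_left (by linarith), min_eq_left (by linarith)]; ring

lemma abs_integral_tentDensity {a x₀ h x : ℝ} (ha : a ≤ x₀ - h) (hh : 0 ≤ h) (hx : a ≤ x) :
    |∫ t in a..x, tentDensity x₀ h t| = tent x₀ h x := by
  rw [integral_tentDensity ha hh hx, abs_of_nonneg (tent_nonneg x₀ hh x)]

lemma integral_tent {a b x₀ h : ℝ} (ha : a ≤ x₀ - h) (hb : x₀ + h ≤ b) (hh : 0 < h) :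
    ∫ x in a..b, tent x₀ h x = 1 := by
  have hmin : ∀ c, IntervalIntegrable (fun x : ℝ => min c x) volume a b := fun c =>
    (continuous_const.min continuous_id).intervalIntegrable a b
  simp only [tent]
  rw [intervalIntegral.integral_div,
    intervalIntegral.integral_sub (((hmin _).const_mul 2).sub (hmin _)) (hmin _),
    intervalIntegral.integral_sub ((hmin _).const_mul 2) (hmin _),
    intervalIntegral.integral_const_mul,
    integral_min_const (by linarith) (by linarith), integral_min_const ha (by linarith),
    integral_min_const (by linarith) hb]
  field_simp
  ring

end

open Filter Topology Metric

lemma exists_mem_tendsto_measure_compl_inter_closedBall_div {β : Type*} [MetricSpace β]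
    [MeasurableSpace β] [BorelSpace β] [SecondCountableTopology β] [HasBesicovitchCovering β]
    (μ : Measure β) [IsLocallyFiniteMeasure μ] {s : Set β} (hs : MeasurableSet s)
    (hμs : μ s ≠ 0) :
    ∃ x ∈ s, Tendsto (fun r => μ (sᶜ ∩ closedBall x r) / μ (closedBall x r)) (𝓝[>] 0) (𝓝 0) := by
  have : (ae (μ.restrict s)).NeBot := ae_restrict_neBot.2 hμs
  obtain ⟨x, hx, hxs⟩ := ((ae_restrict_of_ae
    (Besicovitch.ae_tendsto_measure_inter_div_of_measurableSet μ hs.compl)).and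
    (ae_restrict_mem hs)).exists
  exact ⟨x, hxs, by simpa [hxs] using hx⟩

lemma exists_closedBall_subset_measureReal_diff_le {s U : Set ℝ} (hs : MeasurableSet s)
    (hs0 : volume s ≠ 0) (hU : IsOpen U) (hsU : s ⊆ U) {ε : ℝ} (hε : 0 < ε) :
    ∃ x h, 0 < h ∧ closedBall x h ⊆ U ∧ volume.real (closedBall x h \ s) ≤ ε * (2 * h) := by
  obtain ⟨x, hxs, hx⟩ := exists_mem_tendsto_measure_compl_inter_closedBall_div volume hs hs0
  have hsmall : ∀ᶠ r in 𝓝[>] 0, closedBall x r ⊆ U :=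
    nhdsWithin_le_nhds (eventually_closedBall_subset (hU.mem_nhds (hsU hxs)))
  obtain ⟨h, hlt, hsub, hh⟩ :=
    ((hx.eventually (gt_mem_nhds (ENNReal.ofReal_pos.2 hε))).and
      (hsmall.and self_mem_nhdsWithin)).exists
  refine ⟨x, h, hh, hsub, ?_⟩
  rw [Real.volume_closedBall, ENNReal.div_lt_iff (Or.inl (by simpa using hh))
    (Or.inl ENNReal.ofReal_ne_top), ← ENNReal.ofReal_mul hε.le, inter_comm, ← sdiff_eq] at hlt
  exact ENNReal.toReal_le_of_le_ofReal (by positivity) hlt.le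

section

variable {α : Type*} [MeasurableSpace α] {μ : Measure α}

lemma integral_abs_mul_le_of_ae_abs_le {g F : α → ℝ} {C : ℝ} (hF : Integrable F μ)
    (hg : ∀ᵐ x ∂μ, |g x| ≤ C) : ∫ x, |g x * F x| ∂μ ≤ C * ∫ x, |F x| ∂μ := by
  rw [← integral_const_mul]
  refine integral_mono_of_nonneg (ae_of_all _ fun x => abs_nonneg _) (hF.abs.const_mul C) ?_
  filter_upwards [hg] with x hx
  rw [abs_mul]
  exact mul_le_mul_of_nonneg_right hx (abs_nonneg _)

lemma mul_sub_le_integral_abs_mul {g T : α → ℝ} {B I : Set α} {c K : ℝ} (hB : MeasurableSet B)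
    (hI : MeasurableSet I) (hμI : μ I ≠ ∞) (hc : 0 ≤ c) (hgB : ∀ x ∈ B, c ≤ |g x|)
    (hT0 : ∀ x, 0 ≤ T x) (hTK : ∀ x, T x ≤ K) (hTI : ∀ x ∉ I, T x = 0) (hT : Integrable T μ)
    (hgT : Integrable (fun x => |g x| * T x) μ) :
    c * (∫ x, T x ∂μ - K * μ.real (I \ B)) ≤ ∫ x, |g x| * T x ∂μ := by
  have hcompl : ∫ x in Bᶜ, T x ∂μ ≤ K * μ.real (I \ B) := by
    rw [← indicator_eq_self.2 fun x hx => not_imp_comm.1 (hTI x) hx, setIntegral_indicator hI,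
      inter_comm, ← sdiff_eq]
    exact (Real.le_norm_self _).trans (norm_setIntegral_le_of_norm_le_const
      ((measure_mono sdiff_subset).trans_lt hμI.lt_top) fun x _ =>
        (Real.norm_of_nonneg (hT0 x)).trans_le (hTK x))
  calc c * (∫ x, T x ∂μ - K * μ.real (I \ B))
      ≤ c * ∫ x in B, T x ∂μ := by
        rw [← integral_add_compl hB hT]
        gcongr
        linarith
    _ = ∫ x in B, c * T x ∂μ := (integral_const_mul _ _).symm
    _ ≤ ∫ x in B, |g x| * T x ∂μ :=
        setIntegral_mono_on (hT.integrableOn.const_mul c) hgT.integrableOn hB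
          fun x hx => mul_le_mul_of_nonneg_right (hgB x hx) (hT0 x)
    _ ≤ ∫ x, |g x| * T x ∂μ :=
        setIntegral_le_integral hgT (ae_of_all _ fun x => mul_nonneg (abs_nonneg _) (hT0 x))

end

lemma exists_lt_integral_abs_mul_tent {g : ℝ → ℝ} {a b M c : ℝ} (hab : a < b) (hg : Measurable g)
    (hM : ∀ᵐ x ∂volume.restrict (Ioo a b), |g x| ≤ M) (hc0 : 0 ≤ c)
    (hc : c < essSup (fun x => |g x|) (volume.restrict (Ioo a b))) :
    ∃ x₀ h, 0 < h ∧ a < x₀ - h ∧ x₀ + h < b ∧ c < ∫ x in a..b, |g x| * tent x₀ h x := by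
  obtain ⟨c', hcc', hc'S⟩ := exists_between hc
  have hc' : 0 < c' := hc0.trans_lt hcc'
  have hgc' : MeasurableSet {x | c' < |g x|} := measurableSet_lt measurable_const hg.abs
  set B := {x | c' < |g x|} ∩ Ioo a b
  have hB : MeasurableSet B := hgc'.inter measurableSet_Ioo
  have hB0 : volume B ≠ 0 := by
    have : (ae (volume.restrict (Ioo a b))).NeBot := ae_restrict_neBot.2 (by simpa using hab)
    rw [← Measure.restrict_apply hgc']
    exact frequently_ae_iff.1 (frequently_lt_of_lt_limsup
      (isCoboundedUnder_le_of_le _ fun x => abs_nonneg (g x)) hc'S)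
  set ε := (c' - c) / (4 * c') with hε
  obtain ⟨x₀, h, hh, hsub, hdiff⟩ := exists_closedBall_subset_measureReal_diff_le hB hB0
    isOpen_Ioo inter_subset_right (ε := ε) (div_pos (by linarith) (by positivity))
  rw [Real.closedBall_eq_Icc] at hsub hdiff
  have hT : Integrable (tent x₀ h) (volume.restrict (Ioo a b)) :=
    (continuous_tent x₀ h).integrableOn_Icc.mono_set Ioo_subset_Icc_self
  have hgT : Integrable (fun x => |g x| * tent x₀ h x) (volume.restrict (Ioo a b)) :=
    hT.bdd_mul hg.abs.aestronglyMeasurable (by simpa using hM)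
  have hconc := mul_sub_le_integral_abs_mul hB measurableSet_Icc
    (Measure.restrict_apply_le _ _ |>.trans_lt measure_Icc_lt_top).ne hc'.le
    (fun x hx => hx.1.le) (tent_nonneg x₀ hh.le) (tent_le_inv x₀ hh)
    (fun x hx => tent_eq_zero hh.le fun hx' => hx (Ioo_subset_Icc_self hx')) hT hgT
  rw [measureReal_restrict_apply (measurableSet_Icc.diff hB),
    inter_eq_left.2 (sdiff_subset.trans hsub)] at hconc
  rw [Icc_subset_Ioo_iff (by linarith)] at hsub
  refine ⟨x₀, h, hh, hsub.1, hsub.2, ?_⟩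
  simp only [← integral_Ioc_eq_integral_Ioo, ← intervalIntegral.integral_of_le hab.le,
    integral_tent hsub.1.le hsub.2.le hh] at hconc
  have hmid : c' * (1 - h⁻¹ * (ε * (2 * h))) = (c + c') / 2 := by
    rw [hε]
    field_simp
    ring
  calc c < c' * (1 - h⁻¹ * (ε * (2 * h))) := by linarith
    _ ≤ _ := by gcongr
    _ ≤ _ := hconc

lemma integral_abs_mul_primitive_le {f g : ℝ → ℝ} {a b C : ℝ} (hab : a ≤ b)
    (hf : IntegrableOn f (Ioo a b)) (hg : ∀ᵐ x ∂volume.restrict (Ioo a b), |g x| ≤ C) :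
    ∫ x in a..b, |g x * ∫ t in a..x, f t| ≤ C * ∫ x in a..b, |∫ t in a..x, f t| := by
  have hF : ContinuousOn (fun x => ∫ t in a..x, f t) (Icc a b) := by
    rw [← uIcc_of_le hab]
    exact intervalIntegral.continuousOn_primitive_interval
      (by rwa [uIcc_of_le hab, integrableOn_Icc_iff_integrableOn_Ioo])
  simp only [intervalIntegral.integral_of_le hab, integral_Ioc_eq_integral_Ioo]
  exact integral_abs_mul_le_of_ae_abs_le (hF.integrableOn_Icc.mono_set Ioo_subset_Icc_self) hg

theorem sSup_integral_abs_mul_primitive_eq_essSup {g : ℝ → ℝ} {a b M : ℝ} (hab : a < b)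
    (hg : Measurable g) (hM : ∀ᵐ x ∂volume.restrict (Ioo a b), |g x| ≤ M) :
    sSup {r : ℝ | ∃ f : ℝ → ℝ, IntegrableOn f (Ioo a b) volume ∧
        (∫ x in a..b, |∫ t in a..x, f t|) ≤ 1 ∧
        r = ∫ x in a..b, |g x * ∫ t in a..x, f t|} =
      essSup (fun x => |g x|) (volume.restrict (Ioo a b)) := by
  set P := {r : ℝ | ∃ f : ℝ → ℝ, IntegrableOn f (Ioo a b) volume ∧
    (∫ x in a..b, |∫ t in a..x, f t|) ≤ 1 ∧ r = ∫ x in a..b, |g x * ∫ t in a..x, f t|}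
  set S := essSup (fun x => |g x|) (volume.restrict (Ioo a b))
  have : (ae (volume.restrict (Ioo a b))).NeBot := ae_restrict_neBot.2 (by simpa using hab)
  have hle : ∀ᵐ x ∂volume.restrict (Ioo a b), |g x| ≤ S := ae_le_essSup ⟨M, hM⟩
  have hS : 0 ≤ S := hle.exists.elim fun x hx => (abs_nonneg _).trans hx
  have hzero : (0 : ℝ) ∈ P := ⟨0, integrableOn_zero, by simp, by simp⟩
  refine csSup_eq_of_forall_le_of_forall_lt_exists_gt ⟨0, hzero⟩ ?_ fun c hc => ?_
  · rintro r ⟨f, hf, hf1, rfl⟩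
    exact (integral_abs_mul_primitive_le hab.le hf hle).trans (mul_le_of_le_one_right hS hf1)
  obtain hc0 | hc0 := lt_or_ge c 0
  · exact ⟨0, hzero, hc0⟩
  obtain ⟨x₀, h, hh, ha, hb, hlt⟩ := exists_lt_integral_abs_mul_tent hab hg hM hc0 hc
  have hprim : ∀ x ∈ uIcc a b, |∫ t in a..x, tentDensity x₀ h t| = tent x₀ h x := fun x hx =>
    abs_integral_tentDensity ha.le hh.le (uIcc_of_le hab.le ▸ hx).1
  refine ⟨_, ⟨tentDensity x₀ h, (integrable_tentDensity x₀ h).integrableOn, ?_, rfl⟩, ?_⟩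
  · rw [intervalIntegral.integral_congr hprim, integral_tent ha.le hb.le hh]
  · rwa [intervalIntegral.integral_congr fun x hx => by rw [abs_mul, hprim x hx]]

lemma abs_sum_div_sub_one_div_le {ι : Type*} (s : Finset ι) (a σ : ι → ℝ) {t σ₀ : ℝ}
    (hσ₀ : 0 < σ₀) (hσ : ∀ i, σ₀ ≤ σ i) (ht : σ₀ ≤ t) :
    |∑ i ∈ s, a i / σ i - 1 / t| ≤ (∑ i ∈ s, |a i| + 1) / σ₀ := by
  calc |∑ i ∈ s, a i / σ i - 1 / t| ≤ ∑ i ∈ s, |a i / σ i| + |1 / t| :=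
        (abs_sub _ _).trans (add_le_add_left (Finset.abs_sum_le_sum_abs _ _) _)
    _ ≤ ∑ i ∈ s, |a i| / σ₀ + 1 / σ₀ := by
        gcongr with i
        · rw [abs_div, abs_of_pos (hσ₀.trans_le (hσ i))]
          gcongr
          exact hσ i
        · rw [abs_of_pos (one_div_pos.2 (hσ₀.trans_le ht))]
          gcongr
    _ = (∑ i ∈ s, |a i| + 1) / σ₀ := by rw [add_div, Finset.sum_div]

theorem resolvent_combination_norm_eq_general
    (N : ℕ)
    (σ₀ σ₁ : ℝ) (hσ₀ : 0 < σ₀)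
    (τ : ℝ → ℝ) (hτm : Measurable τ)
    (hτb : ∀ᵐ x ∂volume, x ∈ Set.Ioo (0:ℝ) 1 → σ₀ ≤ τ x ∧ τ x ≤ σ₁)
    (σh : Fin N → ℝ → ℝ) (hσhm : ∀ i, Measurable (σh i))
    (hσhb : ∀ i, ∀ᵐ x ∂volume, x ∈ Set.Ioo (0:ℝ) 1 → σ₀ ≤ σh i x ∧ σh i x ≤ σ₁)
    (a : Fin N → ℝ) :
    sSup {r : ℝ | ∃ f : ℝ → ℝ, IntegrableOn f (Set.Ioo (0:ℝ) 1) volume ∧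
        (∫ x in (0:ℝ)..1, |∫ t in (0:ℝ)..x, f t|) ≤ 1 ∧
        r = ∫ x in (0:ℝ)..1,
          |((∑ i : Fin N, a i / σh i x) - 1 / τ x) * ∫ t in (0:ℝ)..x, f t|} =
      essSup (fun x => |(∑ i : Fin N, a i / σh i x) - 1 / τ x|)
        (volume.restrict (Set.Ioo (0:ℝ) 1)) := by
  have hmeas : Measurable fun x => ∑ i : Fin N, a i / σh i x - 1 / τ x :=
    (Finset.measurable_sum _ fun i _ => measurable_const.div (hσhm i)).sub
      (measurable_const.div hτm)
  refine sSup_integral_abs_mul_primitive_eq_essSup zero_lt_one hmeas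
    (M := (∑ i, |a i| + 1) / σ₀) ?_
  filter_upwards [ae_restrict_mem measurableSet_Ioo, ae_restrict_of_ae hτb,
    ae_restrict_of_ae (ae_all_iff.2 hσhb)] with x hx hτx hσx
  exact abs_sum_div_sub_one_div_le _ _ _ hσ₀ (fun i => (hσx i hx).1) (hτx hx).1

/-- The `‖·‖_*`-norm of `R_τ − Σ aᵢ R_{σ̂ᵢ}`: the supremum of
`∫_0^1 |(Σ aᵢ/σ̂ᵢ(x) − 1/τ(x)) ∫_0^x f| dx` over integrable `f` with
`∫_0^1 |∫_0^x f| dx ≤ 1` equals `esssup_{(0,1)} |Σ aᵢ/σ̂ᵢ − 1/τ|`. -/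
theorem resolvent_combination_norm_eq
    (N : ℕ) (hN : 1 ≤ N)
    (σ₀ σ₁ : ℝ) (hσ₀ : 0 < σ₀) (hσ₀₁ : σ₀ ≤ σ₁)
    (τ : ℝ → ℝ) (hτm : Measurable τ)
    (hτb : ∀ᵐ x ∂volume, x ∈ Set.Ioo (0:ℝ) 1 → σ₀ ≤ τ x ∧ τ x ≤ σ₁)
    (σh : Fin N → ℝ → ℝ) (hσhm : ∀ i, Measurable (σh i))
    (hσhb : ∀ i, ∀ᵐ x ∂volume, x ∈ Set.Ioo (0:ℝ) 1 → σ₀ ≤ σh i x ∧ σh i x ≤ σ₁)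
    (a : Fin N → ℝ) :
    sSup {r : ℝ | ∃ f : ℝ → ℝ, IntegrableOn f (Set.Ioo (0:ℝ) 1) volume ∧
        (∫ x in (0:ℝ)..1, |∫ t in (0:ℝ)..x, f t|) ≤ 1 ∧
        r = ∫ x in (0:ℝ)..1,
          |((∑ i : Fin N, a i / σh i x) - 1 / τ x) * ∫ t in (0:ℝ)..x, f t|} =
      essSup (fun x => |(∑ i : Fin N, a i / σh i x) - 1 / τ x|)
        (volume.restrict (Set.Ioo (0:ℝ) 1)) :=
  resolvent_combination_norm_eq_general N σ₀ σ₁ hσ₀ τ hτm hτb σh hσhm hσhb a
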